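/- Let F be a finitely generated free group, let φ : F → F be an injective group endomorphism, and let H be a finite-index subgroup of F with φ(H) ⊆ H. Let Δ(t) = det(tI − φ^ab ⊗ 1) be the characteristic polynomial of the complex linear map induced by φ on (F/[F,F]) ⊗_ℤ ℂ, and let Δ̃(t) = det(tI − (φ|_H)^ab ⊗ 1) be the characteristic polynomial of the complex linear map induced by φ|_H on (H/[H,H]) ⊗_ℤ ℂ. Then Δ divides Δ̃ in the Laurent polynomial ring ℂ[t, t⁻¹]; equivalently, Δ(t) divides t^N · Δ̃(t) in ℂ[t] for some integer N ≥ 0. -/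

import Mathlib

/-!
Every element of `F/[F,F]` has a nonzero multiple coming from `H/[H,H]`, because some positive
power of every element of `F` lies in the finite-index subgroup `H`. Hence the map
`H/[H,H] ⊗ ℂ → F/[F,F] ⊗ ℂ` induced by the inclusion is surjective, and it intertwines
`(φ|_H)^ab ⊗ 1` with `φ^ab ⊗ 1`. So `φ^ab ⊗ 1` is the map induced by `(φ|_H)^ab ⊗ 1` on a quotient,
and the characteristic polynomial of an endomorphism is the product of those of its restriction to
an invariant subspace and of the induced map on the quotient: `Δ ∣ Δ̃` already in `ℂ[t]`.
-/

open scoped TensorProduct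

/-- The complex linear endomorphism of `(G/[G,G]) ⊗_ℤ ℂ` induced by a group
endomorphism `φ : G →* G`. -/
noncomputable def inducedEnd {G : Type*} [Group G] (φ : G →* G) :
    Module.End ℂ (ℂ ⊗[ℤ] Additive (Abelianization G)) :=
  ((MonoidHom.toAdditive (Abelianization.map φ)).toIntLinearMap).baseChange ℂ

/-- The restriction of an endomorphism `φ` to a `φ`-invariant subgroup `H`,
as an endomorphism of `H`. -/
def restrictHom {G : Type*} [Group G] (φ : G →* G) (H : Subgroup G)
    (hinv : ∀ x ∈ H, φ x ∈ H) : H →* H :=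
  (φ.domRestrict H).codRestrict H fun x => hinv x x.2

/-- The abelianization of a finitely generated group is a finite ℤ-module. -/
instance {G : Type*} [Group G] [Group.FG G] :
    Module.Finite ℤ (Additive (Abelianization G)) :=
  Module.Finite.iff_addGroup_fg.mpr <|
    GroupFG.iff_add_fg.mp (Group.fg_of_surjective (f := Abelianization.of (G := G))
      (fun x => Quotient.inductionOn' x fun g => ⟨g, rfl⟩))

open Module.Basis in
theorem LinearMap.charpoly_eq_charpoly_restrict_mul_charpoly_mapQ {R V : Type*} [CommRing R]
    [AddCommGroup V] [Module R V] [Module.Free R V] [Module.Finite R V]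
    (W : Submodule R V) [Module.Free R W] [Module.Finite R W]
    [Module.Free R (V ⧸ W)] [Module.Finite R (V ⧸ W)]
    (e : V →ₗ[R] V) (he : W ≤ W.comap e) :
    e.charpoly = (e.restrict he).charpoly * (W.mapQ W e he).charpoly := by
  let bW := Module.Free.chooseBasis R W
  let bQ := Module.Free.chooseBasis R (V ⧸ W)
  let b := sumQuot bW bQ
  suffices LinearMap.toMatrix b b e = Matrix.fromBlocks (LinearMap.toMatrix bW bW (e.restrict he))
      (Matrix.of fun i l ↦ (b.repr (e (b (Sum.inr l)))) (Sum.inl i)) 0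
      (LinearMap.toMatrix bQ bQ (W.mapQ W e he)) by
    rw [← LinearMap.charpoly_toMatrix e b, this, Matrix.charpoly_fromBlocks_zero₂₁,
      LinearMap.charpoly_toMatrix, LinearMap.charpoly_toMatrix]
  ext (i | i) (k | k)
  · simp only [b, sumQuot_inl, Matrix.fromBlocks_apply₁₁, LinearMap.toMatrix_apply]
    apply sumQuot_repr_inl_of_mem
  · simp [b, LinearMap.toMatrix_apply]
  · simp [b, LinearMap.toMatrix_apply, (Submodule.Quotient.mk_eq_zero W).mpr (he (bW k).2)]
  · simp only [LinearMap.toMatrix_apply, sumQuot_repr_inr, Matrix.fromBlocks_apply₂₂, b]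
    rw [← sumQuot_inr bW bQ k, W.mapQ_apply]
    simp

theorem LinearMap.charpoly_dvd_charpoly_of_surjective {K V W : Type*} [Field K]
    [AddCommGroup V] [Module K V] [Module.Finite K V]
    [AddCommGroup W] [Module K W] [Module.Finite K W]
    {f : Module.End K V} {g : Module.End K W} {p : W →ₗ[K] V}
    (hp : Function.Surjective p) (hfp : f ∘ₗ p = p ∘ₗ g) :
    f.charpoly ∣ g.charpoly := by
  have hker : LinearMap.ker p ≤ (LinearMap.ker p).comap g := fun w hw => by
    rw [Submodule.mem_comap, LinearMap.mem_ker, ← LinearMap.comp_apply, ← hfp,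
      LinearMap.comp_apply, LinearMap.mem_ker.mp hw, map_zero]
  have hconj : (p.quotKerEquivOfSurjective hp).conj ((LinearMap.ker p).mapQ _ g hker) = f := by
    ext v
    obtain ⟨w, rfl⟩ := hp v
    simpa [LinearEquiv.conj_apply] using (LinearMap.congr_fun hfp w).symm
  rw [g.charpoly_eq_charpoly_restrict_mul_charpoly_mapQ _ hker, ← hconj,
    LinearEquiv.charpoly_conj]
  exact dvd_mul_left _ _

theorem LinearMap.baseChange_surjective_of_exists_nsmul {K M N : Type*} [Field K] [CharZero K]
    [AddCommGroup M] [AddCommGroup N] (f : M →+ N) (hf : ∀ y, ∃ n : ℕ, n ≠ 0 ∧ ∃ x, f x = n • y) :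
    Function.Surjective (f.toIntLinearMap.baseChange K) := by
  rw [← LinearMap.range_eq_top, eq_top_iff]
  rintro z -
  induction z using TensorProduct.induction_on with
  | zero => exact zero_mem _
  | add z z' hz hz' => exact add_mem hz hz'
  | tmul c y =>
    obtain ⟨n, hn, x, hx⟩ := hf y
    refine ⟨(c / n) ⊗ₜ x, ?_⟩
    rw [LinearMap.baseChange_tmul, AddMonoidHom.coe_toIntLinearMap, hx, TensorProduct.tmul_smul,
      ← Nat.cast_smul_eq_nsmul K, TensorProduct.smul_tmul', smul_eq_mul,
      mul_div_cancel₀ c (Nat.cast_ne_zero.mpr hn)]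

namespace Abelianization

variable {G G' G'' : Type*} [Group G] [Group G'] [Group G'']

theorem exists_nsmul_eq_map_subtype (H : Subgroup G) [H.FiniteIndex]
    (y : Additive (Abelianization G)) :
    ∃ n : ℕ, n ≠ 0 ∧ ∃ x, MonoidHom.toAdditive (map H.subtype) x = n • y := by
  induction y using Additive.rec with | _ y => ?_
  induction y using QuotientGroup.induction_on with | _ g => ?_
  obtain ⟨n, hn, -, hg⟩ := H.exists_pow_mem_of_index_ne_zero Subgroup.FiniteIndex.index_ne_zero g
  exact ⟨n, hn.ne', Additive.ofMul (of ⟨g ^ n, hg⟩), ofMul_pow n (of g)⟩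

variable (K : Type*) [Field K]

noncomputable def mapBaseChange (f : G →* G') :
    K ⊗[ℤ] Additive (Abelianization G) →ₗ[K] K ⊗[ℤ] Additive (Abelianization G') :=
  (MonoidHom.toAdditive (map f)).toIntLinearMap.baseChange K

theorem mapBaseChange_comp (f : G' →* G'') (g : G →* G') :
    mapBaseChange K (f.comp g) = mapBaseChange K f ∘ₗ mapBaseChange K g := by
  rw [mapBaseChange, mapBaseChange, mapBaseChange, ← LinearMap.baseChange_comp, ← map_comp]
  rfl

theorem mapBaseChange_subtype_surjective [CharZero K] (H : Subgroup G) [H.FiniteIndex] :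
    Function.Surjective (mapBaseChange K H.subtype) :=
  LinearMap.baseChange_surjective_of_exists_nsmul _ (exists_nsmul_eq_map_subtype H)

end Abelianization

theorem charpoly_dvd_charpoly_restrict
    {F : Type*} [Group F] [Group.FG F]
    (φ : F →* F) (H : Subgroup F) [H.FiniteIndex]
    (hinv : ∀ x ∈ H, φ x ∈ H) :
    ∃ N : ℕ,
      LinearMap.charpoly (inducedEnd φ) ∣
        Polynomial.X ^ N * LinearMap.charpoly (inducedEnd (restrictHom φ H hinv)) := by
  have hcomm : H.subtype.comp (restrictHom φ H hinv) = φ.comp H.subtype := rfl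
  refine ⟨0, ?_⟩
  rw [pow_zero, one_mul]
  refine LinearMap.charpoly_dvd_charpoly_of_surjective
    (Abelianization.mapBaseChange_subtype_surjective ℂ H) ?_
  change Abelianization.mapBaseChange ℂ φ ∘ₗ _ = _ ∘ₗ Abelianization.mapBaseChange ℂ _
  rw [← Abelianization.mapBaseChange_comp, ← Abelianization.mapBaseChange_comp, hcomm]
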